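/- arXiv:1803.10851 — 6 statements merged into one kernel-verified Lean document; each statement's English description precedes it below -/
import Mathlib

section
/- In any three-potent commutative integral residuated lattice, (x ∨ y²)² = (x ∨ y)². -/
/-! In a three-potent CIRL every square is idempotent, since `a² ≤ a³ ≤ a⁴ ≤ a²`. Expanding by
distributivity and integrality, `(x ⊔ y)² ≤ x ⊔ y²`; squaring this and using idempotence of
`(x ⊔ y)²` gives `(x ⊔ y)² ≤ (x ⊔ y²)²`. The converse inequality is monotonicity. -/

/-- A commutative integral residuated lattice (CIRL): a lattice with maximum
element `1`, a commutative monoid structure with unit `1`, and a residuated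
pair `(*, ⇨)`: `a * b ≤ c ↔ b ≤ a ⇨ c`. -/
class CIRL (α : Type*) extends Lattice α, CommMonoid α, HImp α where
  le_top : ∀ a : α, a ≤ 1
  resid : ∀ a b c : α, a * b ≤ c ↔ b ≤ a ⇨ c

namespace CIRL

variable {α : Type*} [CIRL α]

instance : IsOrderedMonoid α where
  mul_le_mul_left a b hab c := by
    rw [mul_comm a, mul_comm b, resid]
    exact hab.trans ((resid c b _).mp le_rfl)

theorem mul_le_left (a b : α) : a * b ≤ a :=
  mul_le_of_le_one_right' (le_top b)

theorem mul_le_right (a b : α) : a * b ≤ b :=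
  mul_le_of_le_one_left' (le_top a)

theorem mul_sup (a b c : α) : a * (b ⊔ c) = a * b ⊔ a * c := by
  refine le_antisymm ?_
    (sup_le (mul_le_mul_right le_sup_left a) (mul_le_mul_right le_sup_right a))
  rw [resid]
  exact sup_le ((resid a b _).mp le_sup_left) ((resid a c _).mp le_sup_right)

theorem sup_mul_sup_le (x y : α) : (x ⊔ y) * (x ⊔ y) ≤ x ⊔ y * y := by
  rw [mul_sup, mul_comm (x ⊔ y) y, mul_sup]
  exact sup_le ((mul_le_right _ x).trans le_sup_left)
    (sup_le ((mul_le_right y x).trans le_sup_left) le_sup_right)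

theorem mul_self_mul_mul_self (h3 : ∀ a : α, a * a ≤ a * a * a) (a : α) :
    a * a * (a * a) = a * a := by
  refine le_antisymm (mul_le_left _ _) ?_
  calc a * a ≤ a * a * a := h3 a
    _ = a * (a * a) := mul_assoc a a a
    _ ≤ a * (a * a * a) := mul_le_mul_right (h3 a) a
    _ = a * a * (a * a) := by simp only [mul_assoc]

end CIRL

open CIRL in
theorem stmt2 {α : Type*} [CIRL α] (h3 : ∀ a : α, a * a ≤ a * a * a) (x y : α) :
    (x ⊔ y * y) * (x ⊔ y * y) = (x ⊔ y) * (x ⊔ y) := by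
  have hle : x ⊔ y * y ≤ x ⊔ y := sup_le_sup_left (mul_le_left y y) x
  have hge : (x ⊔ y) * (x ⊔ y) ≤ x ⊔ y * y := sup_mul_sup_le x y
  refine le_antisymm (mul_le_mul' hle hle) ?_
  calc (x ⊔ y) * (x ⊔ y) = (x ⊔ y) * (x ⊔ y) * ((x ⊔ y) * (x ⊔ y)) :=
        (mul_self_mul_mul_self h3 _).symm
    _ ≤ (x ⊔ y * y) * (x ⊔ y * y) := mul_le_mul' hge hge
end

section
/- In a three-potent involutive CIBRL (S'-algebra), if d² ≤ b ∧ c then d² ≤ b * c. -/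
/-- A commutative integral *bounded* residuated lattice (CIBRL): a CIRL whose
lattice order also has a minimum element `0`. -/
class CIBRL (α : Type*) extends CIRL α, Zero α where
  zero_le : ∀ a : α, (0 : α) ≤ a

instance CIRL.toIsOrderedMonoid {α : Type*} [CIRL α] : IsOrderedMonoid α where
  mul_le_mul_left a b hab c := by
    rw [mul_comm a, mul_comm b, CIRL.resid]
    exact hab.trans ((CIRL.resid c b _).mp le_rfl)

theorem mul_self_le_mul_self_mul_mul_self {α : Type*} [CommMonoid α] [Preorder α]
    [IsOrderedMonoid α] {a : α} (h : a * a ≤ a * a * a) : a * a ≤ a * a * (a * a) :=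
  calc a * a ≤ a * a * a := h
    _ ≤ a * a * a * a := mul_le_mul_left h a
    _ = a * a * (a * a) := mul_assoc _ _ _

theorem stmt6_general {α : Type*} [CIBRL α]
    (h3 : ∀ a : α, a * a ≤ a * a * a)
    (b c d : α) (h : d * d ≤ b ⊓ c) : d * d ≤ b * c :=
  (mul_self_le_mul_self_mul_mul_self (h3 d)).trans
    (mul_le_mul' (h.trans inf_le_left) (h.trans inf_le_right))

theorem stmt6 {α : Type*} [CIBRL α]
    (hinv : ∀ a : α, (a ⇨ 0) ⇨ 0 = a)
    (h3 : ∀ a : α, a * a ≤ a * a * a)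
    (b c d : α) (h : d * d ≤ b ⊓ c) : d * d ≤ b * c :=
  stmt6_general h3 b c d h
end

section
/- There exists an 8-element three-potent involutive CIBRL (S'-algebra) whose underlying lattice is not distributive. -/
/-! The lattice reduct of `A₈` is the hexagon `¬a < ¬c < b < a`, `¬a < ¬b < c < a` with a new
bottom and top. It contains a pentagon, so it is not distributive:
`b ⊓ (c ⊔ ¬c) = b`, whereas `(b ⊓ c) ⊔ (b ⊓ ¬c) = ¬c`. The remaining axioms are finite checks. -/

inductive A₈ : Type
  | zero | na | nb | nc | b | c | a | one
  deriving DecidableEq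

namespace A₈

instance : Fintype A₈ := .ofList [zero, na, nb, nc, b, c, a, one] (fun x => by cases x <;> decide)

-- An order embedding of the lattice into the plane.
def pos : A₈ → ℕ × ℕ
  | zero => (0, 0)
  | na => (1, 1)
  | nc => (2, 1)
  | b => (3, 1)
  | nb => (1, 2)
  | c => (1, 3)
  | a => (3, 3)
  | one => (4, 4)

theorem pos_injective : Function.Injective pos := by decide

instance : PartialOrder A₈ := PartialOrder.lift pos pos_injective

instance : DecidableRel (α := A₈) (· ≤ ·) := fun x y => inferInstanceAs (Decidable (pos x ≤ pos y))

-- Incomparable elements lie on opposite sides of the hexagon, so they join to `a` and meet to `¬a`.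
instance : Lattice A₈ where
  sup x y := if x ≤ y then y else if y ≤ x then x else a
  inf x y := if x ≤ y then x else if y ≤ x then y else na
  le_sup_left := by decide
  le_sup_right := by decide
  sup_le := by decide
  inf_le_left := by decide
  inf_le_right := by decide
  le_inf := by decide

def neg : A₈ → A₈
  | zero => one
  | na => a
  | nb => b
  | nc => c
  | b => nb
  | c => nc
  | a => na
  | one => zero

def mul : A₈ → A₈ → A₈
  | one, y => y
  | x, one => x
  | a, a => a
  | a, b | b, a | b, b => nc
  | a, c | c, a | c, c => nb
  | b, c | c, b => na
  | nb, a | a, nb | nb, c | c, nb | nb, nb => nb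
  | nc, a | a, nc | nc, b | b, nc | nc, nc => nc
  | _, _ => zero

instance : CommMonoid A₈ where
  mul := mul
  one := one
  mul_assoc := by decide
  one_mul := by decide
  mul_one := by decide
  mul_comm := by decide

-- The residual of an involutive monoid: `x ⇨ y = ¬(x * ¬y)`.
instance : HImp A₈ := ⟨fun x y => neg (x * neg y)⟩

instance : CIBRL A₈ where
  le_top := by decide
  resid := by decide
  zero := zero
  zero_le := by decide

theorem himp_zero_himp_zero (x : A₈) : (x ⇨ 0) ⇨ 0 = x := by
  revert x; decide

theorem mul_self_le_mul_self_mul (x : A₈) : x * x ≤ x * x * x := by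
  revert x; decide

theorem card_eq : Nat.card A₈ = 8 := by
  rw [Nat.card_eq_fintype_card]; rfl

theorem inf_sup_ne : b ⊓ (c ⊔ nc) ≠ b ⊓ c ⊔ b ⊓ nc := by
  decide

end A₈

theorem stmt13 :
    ∃ (α : Type) (_ : CIBRL α),
      (∀ a : α, (a ⇨ 0) ⇨ 0 = a) ∧
      (∀ a : α, a * a ≤ a * a * a) ∧
      Nat.card α = 8 ∧
      ¬ (∀ x y z : α, x ⊓ (y ⊔ z) = (x ⊓ y) ⊔ (x ⊓ z)) :=
  ⟨A₈, inferInstance, A₈.himp_zero_himp_zero, A₈.mul_self_le_mul_self_mul, A₈.card_eq,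
    fun distrib => A₈.inf_sup_ne (distrib _ _ _)⟩
end

section
/- There exist an S'-algebra and elements p, q in it such that (p ∧ ¬p) ⇒ q ≠ 1 (failure of ex contradictione quodlibet). -/
/-! The three-element Łukasiewicz chain `0 < ½ < 1`, with `x * y = max 0 (x + y - 1)` and
`x ⇨ y = min 1 (1 - x + y)`, is an involutive three-potent CIBRL. There `½` is its own negation,
so `½ ⊓ ¬½ = ½` and `½ ⇨ 0 = ½ ≠ 1`. -/

inductive Luk3 : Type
  | zero
  | half
  | one
  deriving DecidableEq

namespace Luk3

instance : Fintype Luk3 :=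
  ⟨{zero, half, one}, by intro x; cases x <;> decide⟩

def toFin : Luk3 → Fin 3
  | zero => 0
  | half => 1
  | one => 2

instance : LinearOrder Luk3 :=
  LinearOrder.lift' toFin (by decide)

instance : CommMonoid Luk3 where
  mul
    | one, x => x
    | x, one => x
    | _, _ => zero
  one := one
  mul_assoc := by decide
  mul_comm := by decide
  one_mul := by decide
  mul_one := by decide

instance : HImp Luk3 where
  himp
    | zero, _ => one
    | half, zero => half
    | half, _ => one
    | one, x => x

instance : CIBRL Luk3 where
  zero := zero
  zero_le := by decide
  le_top := by decide
  resid := by decide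

theorem himp_zero_himp_zero (a : Luk3) : (a ⇨ 0) ⇨ 0 = a := by
  revert a; decide

theorem mul_self_le_mul_self_mul (a : Luk3) : a * a ≤ a * a * a := by
  revert a; decide

theorem half_inf_himp_zero_himp_zero_ne_one : (half ⊓ (half ⇨ 0)) ⇨ (0 : Luk3) ≠ 1 := by
  decide

end Luk3

theorem stmt15 :
    ∃ (α : Type) (_ : CIBRL α),
      (∀ a : α, (a ⇨ 0) ⇨ 0 = a) ∧
      (∀ a : α, a * a ≤ a * a * a) ∧
      ∃ p q : α, (p ⊓ (p ⇨ 0)) ⇨ q ≠ 1 :=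
  ⟨Luk3, inferInstance, Luk3.himp_zero_himp_zero, Luk3.mul_self_le_mul_self_mul,
    Luk3.half, 0, Luk3.half_inf_himp_zero_himp_zero_ne_one⟩
end

section
/- There exist an S'-algebra and elements p, q such that (p ⇒ (p ⇒ q)) ⇒ (p ⇒ q) ≠ 1 (failure of contraction). -/
/-- The Łukasiewicz chain `{0, 1/n, …, 1}` with `k : Fin (n + 1)` standing for `k / n`. -/
def Luk (n : ℕ) : Type := Fin (n + 1)

namespace Luk

variable {n : ℕ}

def val (a : Luk n) : ℕ := Fin.val (n := n + 1) a

lemma val_le (a : Luk n) : a.val ≤ n := Nat.lt_succ_iff.mp (Fin.isLt (n := n + 1) a)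

@[ext]
lemma ext {a b : Luk n} (h : a.val = b.val) : a = b := Fin.ext (n := n + 1) h

instance : LinearOrder (Luk n) := inferInstanceAs (LinearOrder (Fin (n + 1)))

lemma le_iff_val_le_val {a b : Luk n} : a ≤ b ↔ a.val ≤ b.val := Iff.rfl

instance : One (Luk n) := ⟨Fin.last n⟩

instance : Zero (Luk n) := ⟨(0 : Fin (n + 1))⟩

instance : Mul (Luk n) :=
  ⟨fun a b => (⟨a.val + b.val - n, by have := a.val_le; have := b.val_le; omega⟩ : Fin (n + 1))⟩

instance : HImp (Luk n) := ⟨fun a b => (⟨min n (n - a.val + b.val), by omega⟩ : Fin (n + 1))⟩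

@[simp] lemma val_one : (1 : Luk n).val = n := rfl

@[simp] lemma val_zero : (0 : Luk n).val = 0 := rfl

@[simp] lemma val_mul (a b : Luk n) : (a * b).val = a.val + b.val - n := rfl

@[simp] lemma val_himp (a b : Luk n) : (a ⇨ b).val = min n (n - a.val + b.val) := rfl

instance : CommMonoid (Luk n) where
  mul_assoc a b c := by
    ext; simp only [val_mul]; have := a.val_le; have := b.val_le; have := c.val_le; omega
  one_mul a := by ext; simp only [val_mul, val_one]; omega
  mul_one a := by ext; simp only [val_mul, val_one]; omega
  mul_comm a b := by ext; simp only [val_mul]; omega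

instance : CIBRL (Luk n) where
  le_top a := a.val_le
  resid a b c := by
    simp only [le_iff_val_le_val, val_mul, val_himp]
    have := a.val_le; have := b.val_le
    omega
  zero_le a := Nat.zero_le a.val

lemma himp_zero_himp_zero (a : Luk n) : (a ⇨ 0) ⇨ 0 = a := by
  ext; simp only [val_himp, val_zero]; have := a.val_le; omega

lemma mul_self_le_mul_self_mul_self (hn : n ≤ 2) (a : Luk n) : a * a ≤ a * a * a := by
  simp only [le_iff_val_le_val, val_mul]; have := a.val_le; omega

lemma exists_himp_himp_himp_ne_one (hn : 2 ≤ n) :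
    ∃ p q : Luk n, (p ⇨ (p ⇨ q)) ⇨ (p ⇨ q) ≠ 1 := by
  let p : Luk n := (⟨n - 1, by omega⟩ : Fin (n + 1))
  have hp : p.val = n - 1 := rfl
  refine ⟨p, 0, fun h => ?_⟩
  have := congrArg val h
  simp only [val_himp, val_zero, val_one, hp] at this
  omega

end Luk

theorem stmt16 :
    ∃ (α : Type) (_ : CIBRL α),
      (∀ a : α, (a ⇨ 0) ⇨ 0 = a) ∧
      (∀ a : α, a * a ≤ a * a * a) ∧
      ∃ p q : α, (p ⇨ (p ⇨ q)) ⇨ (p ⇨ q) ≠ 1 :=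
  ⟨Luk 2, inferInstance, Luk.himp_zero_himp_zero, Luk.mul_self_le_mul_self_mul_self le_rfl,
    Luk.exists_himp_himp_himp_ne_one le_rfl⟩
end

section
/- Let A be a three-potent CIRL and A* its Galatos–Raftery double, obtained by adjoining a disjoint copy ¬A below A with operations extended by a * ¬b := ¬(a ⇒ b), ¬a * ¬b := ¬1, a ⇒ ¬b := ¬(a*b), ¬a ⇒ ¬b := b ⇒ a, ¬a ⇒ b := 1, ¬(¬a) := a, and De Morgan extensions of the lattice operations. Then A* is a three-potent involutive CIBRL (an S'-algebra). -/
/-! The Galatos–Raftery doubling construction `A* = A ∪ ¬A`, encoded on `α ⊕ α`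
where `.inr a` is the element `a ∈ A` and `.inl a` is its disjoint copy `¬a`. -/

variable {α : Type*} [CIRL α]

/-- The order on the double: it extends the order of `A`, puts every `¬a`
below every `b ∈ A`, and `¬a ≤ ¬b` iff `b ≤ a`. -/
def dle : α ⊕ α → α ⊕ α → Prop
  | .inr a, .inr b => a ≤ b
  | .inl _, .inr _ => True
  | .inr _, .inl _ => False
  | .inl a, .inl b => b ≤ a

/-- Join on the double (lattice operations extended via De Morgan laws). -/
def dsup : α ⊕ α → α ⊕ α → α ⊕ α
  | .inr a, .inr b => .inr (a ⊔ b)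
  | .inl _, .inr b => .inr b
  | .inr a, .inl _ => .inr a
  | .inl a, .inl b => .inl (a ⊓ b)

/-- Meet on the double (lattice operations extended via De Morgan laws). -/
def dinf : α ⊕ α → α ⊕ α → α ⊕ α
  | .inr a, .inr b => .inr (a ⊓ b)
  | .inl a, .inr _ => .inl a
  | .inr _, .inl b => .inl b
  | .inl a, .inl b => .inl (a ⊔ b)

/-- Monoid operation on the double: `a * ¬b := ¬(a ⇨ b)`, `¬a * ¬b := ¬1`. -/
def dmul : α ⊕ α → α ⊕ α → α ⊕ α
  | .inr a, .inr b => .inr (a * b)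
  | .inr a, .inl b => .inl (a ⇨ b)
  | .inl a, .inr b => .inl (b ⇨ a)
  | .inl _, .inl _ => .inl 1

/-- Implication on the double: `a ⇨ ¬b := ¬(a*b)`, `¬a ⇨ ¬b := b ⇨ a`,
`¬a ⇨ b := 1`. -/
def dimp : α ⊕ α → α ⊕ α → α ⊕ α
  | .inr a, .inr b => .inr (a ⇨ b)
  | .inr a, .inl b => .inl (a * b)
  | .inl _, .inr _ => .inr 1
  | .inl a, .inl b => .inr (b ⇨ a)

/-- Top element `1` of the double. -/
def done : α ⊕ α := .inr 1

/-- Bottom element `0 := ¬1` of the double. -/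
def dzero : α ⊕ α := .inl 1

/-- Negation `¬x := x ⇨ 0` on the double. -/
def dneg (x : α ⊕ α) : α ⊕ α := dimp x dzero

/-!
Every element of the double is either `a` or `¬a` for some `a ∈ A`, and each operation of
the double is defined by cases on this dichotomy, so every axiom of a three-potent
involutive CIBRL splits into finitely many cases, each of which is an identity or
inequality of `A`: residuation itself, the currying law `a * b ⇨ c = a ⇨ b ⇨ c`, the
exchange law `c ≤ b ⇨ a ↔ b ≤ c ⇨ a`, and `a ⇨ 1 = 1`, `1 ⇨ a = a`. Three-potency of
`¬a` is automatic because `¬a * ¬a` is already the bottom `¬1`.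
-/

namespace CIRL

theorem mul_imp_le (a b : α) : a * (a ⇨ b) ≤ b := (resid a _ b).mpr le_rfl

theorem mul_le_mul_left' (a : α) {b c : α} (h : b ≤ c) : a * b ≤ a * c :=
  (resid a b _).mpr (h.trans ((resid a c _).mp le_rfl))

theorem imp_one (a : α) : a ⇨ 1 = 1 :=
  le_antisymm (le_top _) ((resid a 1 1).mp (le_top _))

theorem one_imp (a : α) : 1 ⇨ a = a :=
  le_antisymm (by simpa only [one_mul] using mul_imp_le 1 a)
    ((resid 1 a a).mp (one_mul a).le)

theorem imp_imp (a b c : α) : a ⇨ b ⇨ c = a * b ⇨ c := by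
  apply le_antisymm
  · rw [← resid, mul_comm a b, mul_assoc]
    exact (mul_le_mul_left' b (mul_imp_le a _)).trans (mul_imp_le b c)
  · rw [← resid, ← resid, ← mul_assoc, mul_comm b a]
    exact mul_imp_le _ c

theorem imp_left_comm (a b c : α) : a ⇨ b ⇨ c = b ⇨ a ⇨ c := by
  rw [imp_imp, mul_comm, ← imp_imp]

theorem le_imp_comm {a b c : α} : a ≤ b ⇨ c ↔ b ≤ a ⇨ c := by
  rw [← resid, mul_comm, resid]

end CIRL

theorem dle_refl : ∀ x : α ⊕ α, dle x x
  | .inr a => le_refl a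
  | .inl a => le_refl a

theorem dle_antisymm : ∀ x y : α ⊕ α, dle x y → dle y x → x = y
  | .inr _, .inr _, h, h' => congrArg _ (le_antisymm h h')
  | .inl _, .inl _, h, h' => congrArg _ (le_antisymm h' h)
  | .inr _, .inl _, h, _ => nomatch h
  | .inl _, .inr _, _, h' => nomatch h'

theorem dle_trans : ∀ x y z : α ⊕ α, dle x y → dle y z → dle x z
  | .inr _, .inr _, .inr _, h, h' => le_trans h h'
  | .inl _, .inl _, .inl _, h, h' => le_trans h' h
  | .inl _, _, .inr _, _, _ => trivial
  | .inr _, .inl _, _, h, _ => nomatch h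
  | _, .inr _, .inl _, _, h' => nomatch h'

theorem le_dsup_left : ∀ x y : α ⊕ α, dle x (dsup x y)
  | .inr _, .inr _ => le_sup_left
  | .inl _, .inl _ => inf_le_left
  | .inr a, .inl _ => le_refl a
  | .inl _, .inr _ => trivial

theorem le_dsup_right : ∀ x y : α ⊕ α, dle y (dsup x y)
  | .inr _, .inr _ => le_sup_right
  | .inl _, .inl _ => inf_le_right
  | .inr _, .inl _ => trivial
  | .inl _, .inr b => le_refl b

theorem dsup_dle : ∀ x y z : α ⊕ α, dle x z → dle y z → dle (dsup x y) z
  | .inr _, .inr _, .inr _, h, h' => sup_le h h'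
  | .inl _, .inl _, .inl _, h, h' => le_inf h h'
  | .inl _, .inl _, .inr _, _, _ => trivial
  | .inr _, .inl _, _, h, _ => h
  | .inl _, .inr _, _, _, h' => h'
  | .inr _, .inr _, .inl _, h, _ => nomatch h

theorem dinf_dle_left : ∀ x y : α ⊕ α, dle (dinf x y) x
  | .inr _, .inr _ => inf_le_left
  | .inl _, .inl _ => le_sup_left
  | .inr _, .inl _ => trivial
  | .inl a, .inr _ => le_refl a

theorem dinf_dle_right : ∀ x y : α ⊕ α, dle (dinf x y) y
  | .inr _, .inr _ => inf_le_right
  | .inl _, .inl _ => le_sup_right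
  | .inr _, .inl b => le_refl b
  | .inl _, .inr _ => trivial

theorem dle_dinf : ∀ x y z : α ⊕ α, dle z x → dle z y → dle z (dinf x y)
  | .inr _, .inr _, .inr _, h, h' => le_inf h h'
  | .inl _, .inl _, .inl _, h, h' => sup_le h h'
  | .inr _, .inr _, .inl _, _, _ => trivial
  | .inl _, .inr _, _, h, _ | .inl _, .inl _, .inr _, h, _ => h
  | .inr _, .inl _, _, _, h' => h'

theorem dle_done : ∀ x : α ⊕ α, dle x done
  | .inr a => CIRL.le_top a
  | .inl _ => trivial

theorem dzero_dle : ∀ x : α ⊕ α, dle dzero x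
  | .inr _ => trivial
  | .inl a => CIRL.le_top a

theorem dmul_comm : ∀ x y : α ⊕ α, dmul x y = dmul y x
  | .inr a, .inr b => congrArg _ (mul_comm a b)
  | .inr _, .inl _ | .inl _, .inr _ | .inl _, .inl _ => rfl

theorem dmul_assoc : ∀ x y z : α ⊕ α, dmul (dmul x y) z = dmul x (dmul y z)
  | .inr a, .inr b, .inr c => congrArg _ (mul_assoc a b c)
  | .inr a, .inr b, .inl c => congrArg _ (CIRL.imp_imp a b c).symm
  | .inr a, .inl b, .inr c => congrArg _ (CIRL.imp_left_comm c a b)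
  | .inr a, .inl _, .inl _ => congrArg _ (CIRL.imp_one a).symm
  | .inl a, .inr b, .inr c =>
    congrArg Sum.inl (by rw [CIRL.imp_imp, mul_comm] : c ⇨ b ⇨ a = b * c ⇨ a)
  | .inl _, .inl _, .inr c => congrArg _ (CIRL.imp_one c)
  | .inl _, .inr _, .inl _ | .inl _, .inl _, .inl _ => rfl

theorem done_dmul : ∀ x : α ⊕ α, dmul done x = x
  | .inr a => congrArg _ (one_mul a)
  | .inl a => congrArg _ (CIRL.one_imp a)

theorem dmul_dle_iff_dle_dimp : ∀ x y z : α ⊕ α, dle (dmul x y) z ↔ dle y (dimp x z)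
  | .inr a, .inr b, .inr c => CIRL.resid a b c
  | .inr a, .inl b, .inl c => (CIRL.resid a c b).symm
  | .inl _, .inr _, .inl _ => CIRL.le_imp_comm
  | .inr _, .inr _, .inl _ => Iff.rfl
  | .inl _, .inr b, .inr _ => iff_of_true trivial (CIRL.le_top b)
  | .inl _, .inl _, .inl c => iff_of_true (CIRL.le_top c) trivial
  | .inr _, .inl _, .inr _ | .inl _, .inl _, .inr _ => iff_of_true trivial trivial

theorem dneg_dneg : ∀ x : α ⊕ α, dneg (dneg x) = x
  | .inr a => congrArg Sum.inr (by rw [mul_one, CIRL.one_imp] : 1 ⇨ a * 1 = a)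
  | .inl a => congrArg Sum.inl (by rw [mul_one, CIRL.one_imp] : (1 ⇨ a) * 1 = a)

theorem dmul_self_dle_dmul_dmul_self (h3 : ∀ a : α, a * a ≤ a * a * a) :
    ∀ x : α ⊕ α, dle (dmul x x) (dmul x (dmul x x))
  | .inr a => (h3 a).trans_eq (mul_assoc a a a)
  | .inl _ => le_refl (1 : α)

/-- If `A` is a three-potent CIRL, then its Galatos–Raftery double `A*` is a
three-potent involutive CIBRL (an `S'`-algebra): `dle` is a partial order for
which `dsup`/`dinf` are join/meet, `done` is the top and `dzero` the bottom,
`dmul` is a commutative monoid operation with unit `done`, `(dmul, dimp)` is a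
residuated pair, the negation is involutive, and three-potency holds. -/
theorem stmt17 {α : Type*} [CIRL α] (h3 : ∀ a : α, a * a ≤ a * a * a) :
    (∀ x : α ⊕ α, dle x x) ∧
    (∀ x y : α ⊕ α, dle x y → dle y x → x = y) ∧
    (∀ x y z : α ⊕ α, dle x y → dle y z → dle x z) ∧
    (∀ x y : α ⊕ α, dle x (dsup x y)) ∧
    (∀ x y : α ⊕ α, dle y (dsup x y)) ∧
    (∀ x y z : α ⊕ α, dle x z → dle y z → dle (dsup x y) z) ∧
    (∀ x y : α ⊕ α, dle (dinf x y) x) ∧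
    (∀ x y : α ⊕ α, dle (dinf x y) y) ∧
    (∀ x y z : α ⊕ α, dle z x → dle z y → dle z (dinf x y)) ∧
    (∀ x : α ⊕ α, dle x done) ∧
    (∀ x : α ⊕ α, dle dzero x) ∧
    (∀ x y : α ⊕ α, dmul x y = dmul y x) ∧
    (∀ x y z : α ⊕ α, dmul (dmul x y) z = dmul x (dmul y z)) ∧
    (∀ x : α ⊕ α, dmul done x = x) ∧
    (∀ x y z : α ⊕ α, dle (dmul x y) z ↔ dle y (dimp x z)) ∧
    (∀ x : α ⊕ α, dimp (dimp x dzero) dzero = x) ∧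
    (∀ x : α ⊕ α, dle (dmul x x) (dmul x (dmul x x))) :=
  ⟨dle_refl, dle_antisymm, dle_trans, le_dsup_left, le_dsup_right, dsup_dle, dinf_dle_left,
    dinf_dle_right, dle_dinf, dle_done, dzero_dle, dmul_comm, dmul_assoc, done_dmul,
    dmul_dle_iff_dle_dimp, dneg_dneg, dmul_self_dle_dmul_dmul_self h3⟩
end
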